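/- arXiv:2312.00965 — 4 statements merged into one kernel-verified Lean document; each statement's English description precedes it below -/
import Mathlib

section
/- Let κ ∈ ℤ with κ ≥ -1, Z > 0, and W : [0,Z] → ℝ be smooth and strictly positive. Define ζ(z) = ( ((κ+2)/2) ∫₀^z ω^{κ/2} √(W(ω)) dω )^{2/(κ+2)} for z ∈ [0,Z]. Then ζ is differentiable on (0,Z) with derivative ζ'(z) = (ζ(z)/z)^{-κ/2} √(W(z)), and ζ is a strictly increasing bijection from [0,Z] onto [0, ζ(Z)]. -/
/-!
With `a = κ/2` and `g = √W`, the Langer variable is `ζ = ((a + 1) F)^(1/(a+1))` for the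
primitive `F z = ∫₀^z ω^a g(ω) dω`. The exponent `a > -1` makes `F` finite, and `g > 0` makes it
positive on `(0, Z]`; the chain rule then gives `ζ' = ((a + 1) F)^(1/(a+1) - 1) z^a g(z)`, which is
`(ζ/z)^(-a) g(z)` since `1/(a+1) - 1 = -a/(a+1)`. Hence `ζ' > 0`, so `ζ` is strictly increasing,
and as `ζ 0 = 0` and `ζ` is continuous on `[0, Z]` it maps `[0, Z]` onto `[0, ζ Z]`.
-/

open Set MeasureTheory

noncomputable def langerVariable (a : ℝ) (g : ℝ → ℝ) (z : ℝ) : ℝ :=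
  ((a + 1) * ∫ ω in (0:ℝ)..z, ω ^ a * g ω) ^ (a + 1)⁻¹

section LangerVariable

variable {a Z : ℝ} {g : ℝ → ℝ}

theorem intervalIntegrable_rpow_mul (ha : -1 < a) (hg : ContinuousOn g (Icc 0 Z)) {z : ℝ}
    (hz : z ∈ Icc 0 Z) : IntervalIntegrable (fun ω => ω ^ a * g ω) volume 0 z :=
  (intervalIntegral.intervalIntegrable_rpow' ha).mul_continuousOn <|
    hg.mono <| by rw [uIcc_of_le hz.1]; exact Icc_subset_Icc_right hz.2

theorem integral_rpow_mul_pos (ha : -1 < a) (hg : ContinuousOn g (Icc 0 Z))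
    (hgpos : ∀ ω ∈ Ioo 0 Z, 0 < g ω) {z : ℝ} (hz : z ∈ Ioc 0 Z) :
    0 < ∫ ω in (0:ℝ)..z, ω ^ a * g ω :=
  intervalIntegral.intervalIntegral_pos_of_pos_on
    (intervalIntegrable_rpow_mul ha hg (Ioc_subset_Icc_self hz))
    (fun ω hω => mul_pos (Real.rpow_pos_of_pos hω.1 a) (hgpos ω ⟨hω.1, hω.2.trans_le hz.2⟩)) hz.1

theorem hasDerivAt_integral_rpow_mul (ha : -1 < a) (hg : ContinuousOn g (Icc 0 Z)) {z : ℝ}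
    (hz : z ∈ Ioo 0 Z) :
    HasDerivAt (fun t => ∫ ω in (0:ℝ)..t, ω ^ a * g ω) (z ^ a * g z) z := by
  have hcont : ContinuousOn (fun ω => ω ^ a * g ω) (Ioo 0 Z) :=
    (continuousOn_id.rpow_const fun ω hω => Or.inl hω.1.ne').mul (hg.mono Ioo_subset_Icc_self)
  exact intervalIntegral.integral_hasDerivAt_right
    (intervalIntegrable_rpow_mul ha hg (Ioo_subset_Icc_self hz))
    (hcont.stronglyMeasurableAtFilter isOpen_Ioo z hz) (hcont.continuousAt (isOpen_Ioo.mem_nhds hz))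

theorem langerVariable_zero (ha : -1 < a) : langerVariable a g 0 = 0 := by
  have : (a + 1)⁻¹ ≠ 0 := inv_ne_zero (by linarith)
  simp [langerVariable, Real.zero_rpow this]

theorem langerVariable_pos (ha : -1 < a) (hg : ContinuousOn g (Icc 0 Z))
    (hgpos : ∀ ω ∈ Ioo 0 Z, 0 < g ω) {z : ℝ} (hz : z ∈ Ioc 0 Z) : 0 < langerVariable a g z :=
  Real.rpow_pos_of_pos (mul_pos (by linarith) (integral_rpow_mul_pos ha hg hgpos hz)) _

theorem hasDerivAt_langerVariable (ha : -1 < a) (hg : ContinuousOn g (Icc 0 Z))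
    (hgpos : ∀ ω ∈ Ioo 0 Z, 0 < g ω) {z : ℝ} (hz : z ∈ Ioo 0 Z) :
    HasDerivAt (langerVariable a g) ((langerVariable a g z / z) ^ (-a) * g z) z := by
  have ha1 : a + 1 ≠ 0 := by linarith
  set X := (a + 1) * ∫ ω in (0:ℝ)..z, ω ^ a * g ω
  have hX : 0 < X :=
    mul_pos (by linarith) (integral_rpow_mul_pos ha hg hgpos (Ioo_subset_Ioc_self hz))
  have hexp : (a + 1)⁻¹ * -a = (a + 1)⁻¹ - 1 := by field_simp; ring
  convert ((hasDerivAt_integral_rpow_mul ha hg hz).const_mul (a + 1)).rpow_const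
    (p := (a + 1)⁻¹) (Or.inl hX.ne') using 1
  · rfl
  change (X ^ (a + 1)⁻¹ / z) ^ (-a) * g z
    = (a + 1) * (z ^ a * g z) * (a + 1)⁻¹ * X ^ ((a + 1)⁻¹ - 1)
  rw [Real.div_rpow (Real.rpow_nonneg hX.le _) hz.1.le, ← Real.rpow_mul hX.le, hexp,
    Real.rpow_neg hz.1.le]
  field_simp

theorem continuousOn_langerVariable (ha : -1 < a) (hg : ContinuousOn g (Icc 0 Z)) :
    ContinuousOn (langerVariable a g) (Icc 0 Z) := by
  intro z hz
  have hZ : Z ∈ Icc 0 Z := ⟨hz.1.trans hz.2, le_rfl⟩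
  have hF := intervalIntegral.continuousOn_primitive_interval'
    (intervalIntegrable_rpow_mul ha hg hZ) left_mem_uIcc
  rw [uIcc_of_le hZ.1] at hF
  exact ((continuousOn_const.mul hF).rpow_const fun _ _ => Or.inr (by simp; linarith)) z hz

theorem strictMonoOn_langerVariable (ha : -1 < a) (hg : ContinuousOn g (Icc 0 Z))
    (hgpos : ∀ ω ∈ Ioo 0 Z, 0 < g ω) : StrictMonoOn (langerVariable a g) (Icc 0 Z) := by
  refine strictMonoOn_of_deriv_pos (convex_Icc 0 Z) (continuousOn_langerVariable ha hg)
    fun z hz => ?_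
  rw [interior_Icc] at hz
  rw [(hasDerivAt_langerVariable ha hg hgpos hz).deriv]
  have hζ := langerVariable_pos ha hg hgpos (Ioo_subset_Ioc_self hz)
  exact mul_pos (Real.rpow_pos_of_pos (div_pos hζ hz.1) _) (hgpos z hz)

theorem bijOn_langerVariable (ha : -1 < a) (hg : ContinuousOn g (Icc 0 Z))
    (hgpos : ∀ ω ∈ Ioo 0 Z, 0 < g ω) (hZ : 0 ≤ Z) :
    BijOn (langerVariable a g) (Icc 0 Z) (Icc 0 (langerVariable a g Z)) := by
  have hmono := strictMonoOn_langerVariable ha hg hgpos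
  have h0 : (0:ℝ) ∈ Icc 0 Z := ⟨le_rfl, hZ⟩
  refine ⟨fun z hz => ⟨?_, hmono.monotoneOn hz ⟨hZ, le_rfl⟩ hz.2⟩, hmono.injOn, ?_⟩
  · simpa [langerVariable_zero ha] using hmono.monotoneOn h0 hz hz.1
  · have := intermediate_value_Icc hZ (continuousOn_langerVariable ha hg)
    rwa [langerVariable_zero ha] at this

end LangerVariable

/-- Properties of the Langer variable `ζ`. -/
theorem langer_variable_deriv_and_bijection
    (κ : ℤ) (hκ : -1 ≤ κ) (Z : ℝ) (hZ : 0 < Z)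
    (W : ℝ → ℝ) (hW : ContDiffOn ℝ (⊤ : ℕ∞) W (Icc 0 Z))
    (hWpos : ∀ z ∈ Icc (0:ℝ) Z, 0 < W z)
    (ζ : ℝ → ℝ)
    (hζ : ∀ z, ζ z = ((((κ:ℝ) + 2) / 2) *
        ∫ ω in (0:ℝ)..z, ω ^ ((κ:ℝ)/2) * Real.sqrt (W ω)) ^ (2 / ((κ:ℝ) + 2))) :
    (∀ z ∈ Ioo (0:ℝ) Z,
        HasDerivAt ζ ((ζ z / z) ^ (-(κ:ℝ)/2) * Real.sqrt (W z)) z)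
    ∧ StrictMonoOn ζ (Icc 0 Z)
    ∧ BijOn ζ (Icc 0 Z) (Icc 0 (ζ Z)) := by
  have ha : -1 < (κ:ℝ) / 2 := by
    have : (-1:ℝ) ≤ κ := by exact_mod_cast hκ
    linarith
  have hg : ContinuousOn (fun ω => √(W ω)) (Icc 0 Z) := hW.continuousOn.sqrt
  have hgpos : ∀ ω ∈ Ioo 0 Z, 0 < √(W ω) :=
    fun ω hω => Real.sqrt_pos.2 (hWpos ω (Ioo_subset_Icc_self hω))
  obtain rfl : ζ = langerVariable ((κ:ℝ) / 2) (fun ω => √(W ω)) := by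
    funext z
    rw [hζ, langerVariable]
    congr 1
    · ring
    · field_simp
  refine ⟨fun z hz => ?_, strictMonoOn_langerVariable ha hg hgpos,
    bijOn_langerVariable ha hg hgpos hZ.le⟩
  rw [neg_div]
  exact hasDerivAt_langerVariable ha hg hgpos hz
end

section
/- Let κ ∈ ℤ with κ ≥ -1. The function ξ defined on [0,Z] by ζ(z) = z·ξ(z), where ζ(z) = ( ((κ+2)/2) ∫₀^z ω^{κ/2} √(W(ω)) dω )^{2/(κ+2)}, extends continuously to z = 0 with ξ(0)^{κ+2} = W(0). -/
/-!
Write `p = κ/2 > -1`. Since `∫₀^z ω^p dω = z^(p+1)/(p+1)`, the quantity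
`(p+1) z^(-(p+1)) ∫₀^z ω^p √W(ω) dω` is a weighted average of `√W` over `[0, z]`,
so it tends to `√W(0)` as `z → 0⁺`. Dividing `ζ(z) = ((p+1) ∫₀^z ω^p √W)^(1/(p+1))`
by `z` is the same as taking the `1/(p+1)`-th power of that average, hence
`ξ(z) → √W(0)^(1/(p+1))`, whose `(κ+2) = 2(p+1)`-th power is `W(0)`.
-/

open Set Filter Topology

theorem integral_rpow_zero_left {p : ℝ} (hp : -1 < p) (z : ℝ) :
    ∫ ω in (0:ℝ)..z, ω ^ p = z ^ (p + 1) / (p + 1) := by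
  rw [integral_rpow (Or.inl hp), Real.zero_rpow (by linarith), sub_zero]

theorem abs_integral_rpow_mul_le {p z c : ℝ} (hp : -1 < p) (hz : 0 ≤ z) {f : ℝ → ℝ}
    (hf : ∀ ω ∈ Ioc 0 z, |f ω| ≤ c) :
    |∫ ω in (0:ℝ)..z, ω ^ p * f ω| ≤ c * (z ^ (p + 1) / (p + 1)) := by
  calc |∫ ω in (0:ℝ)..z, ω ^ p * f ω|
      ≤ ∫ ω in (0:ℝ)..z, ω ^ p * c := by
        refine intervalIntegral.norm_integral_le_of_norm_le (f := fun ω => ω ^ p * f ω) hz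
          (MeasureTheory.ae_of_all _ fun ω hω => ?_)
          ((intervalIntegral.intervalIntegrable_rpow' hp).mul_const c)
        rw [Real.norm_eq_abs, abs_mul, abs_of_nonneg (Real.rpow_nonneg hω.1.le p)]
        exact mul_le_mul_of_nonneg_left (hf ω hω) (Real.rpow_nonneg hω.1.le p)
    _ = c * (z ^ (p + 1) / (p + 1)) := by
        rw [intervalIntegral.integral_mul_const, integral_rpow_zero_left hp, mul_comm]

theorem tendsto_rpow_weighted_average {p Z : ℝ} (hp : -1 < p) (hZ : 0 < Z) {g : ℝ → ℝ}
    (hg : ContinuousOn g (Icc 0 Z)) :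
    Tendsto (fun z => (p + 1) * (∫ ω in (0:ℝ)..z, ω ^ p * g ω) / z ^ (p + 1))
      (𝓝[>] 0) (𝓝 (g 0)) := by
  have hp1 : 0 < p + 1 := by linarith
  rw [Metric.tendsto_nhdsWithin_nhds]
  intro ε hε
  obtain ⟨δ, hδ, hgδ⟩ := Metric.continuousWithinAt_iff.mp (hg 0 ⟨le_rfl, hZ.le⟩) (ε / 2)
    (half_pos hε)
  refine ⟨min δ Z, lt_min hδ hZ, fun z (hz : 0 < z) hzδ => ?_⟩
  rw [Real.dist_eq, sub_zero, abs_of_pos hz, lt_min_iff] at hzδ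
  have hzp : 0 < z ^ (p + 1) := Real.rpow_pos_of_pos hz _
  have hgI : IntervalIntegrable (fun ω => ω ^ p * g ω) MeasureTheory.volume 0 z :=
    (intervalIntegral.intervalIntegrable_rpow' hp).mul_continuousOn
      (hg.mono (by rw [uIcc_of_le hz.le]; exact Icc_subset_Icc le_rfl hzδ.2.le))
  have hclose : ∀ ω ∈ Ioc 0 z, |g ω - g 0| ≤ ε / 2 := fun ω hω => by
    have hω0 : dist ω 0 < δ := by
      rw [Real.dist_eq, sub_zero, abs_of_pos hω.1]; exact hω.2.trans_lt hzδ.1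
    exact (hgδ ⟨hω.1.le, hω.2.trans hzδ.2.le⟩ hω0).le
  have hsplit : (p + 1) * (∫ ω in (0:ℝ)..z, ω ^ p * g ω) / z ^ (p + 1) - g 0
      = (p + 1) * (∫ ω in (0:ℝ)..z, ω ^ p * (g ω - g 0)) / z ^ (p + 1) := by
    simp only [mul_sub]
    rw [intervalIntegral.integral_sub hgI
      ((intervalIntegral.intervalIntegrable_rpow' hp).mul_const _),
      intervalIntegral.integral_mul_const, integral_rpow_zero_left hp]
    field_simp
  rw [Real.dist_eq, hsplit, abs_div, abs_mul, abs_of_pos hp1, abs_of_pos hzp,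
    div_lt_iff₀ hzp]
  calc (p + 1) * |∫ ω in (0:ℝ)..z, ω ^ p * (g ω - g 0)|
      ≤ (p + 1) * (ε / 2 * (z ^ (p + 1) / (p + 1))) :=
        mul_le_mul_of_nonneg_left (abs_integral_rpow_mul_le hp hz.le hclose) hp1.le
    _ < ε * z ^ (p + 1) := by field_simp; nlinarith

theorem rpow_inv_div_eq {a x z : ℝ} (ha : a ≠ 0) (hx : 0 ≤ x) (hz : 0 < z) :
    x ^ a⁻¹ / z = (x / z ^ a) ^ a⁻¹ := by
  rw [Real.div_rpow hx (Real.rpow_nonneg hz.le a), Real.rpow_rpow_inv hz.le ha]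

/-- The function `ξ(z) = ζ(z)/z` extends continuously to `z = 0`
with `ξ(0)^(κ+2) = W 0`. -/
theorem langer_xi_extends_continuously
    (κ : ℤ) (hκ : -1 ≤ κ) (Z : ℝ) (hZ : 0 < Z)
    (W : ℝ → ℝ) (hW : ContDiffOn ℝ (⊤ : ℕ∞) W (Icc 0 Z))
    (hWpos : ∀ z ∈ Icc (0:ℝ) Z, 0 < W z)
    (ζ : ℝ → ℝ)
    (hζ : ∀ z, ζ z = ((((κ:ℝ) + 2) / 2) *
        ∫ ω in (0:ℝ)..z, ω ^ ((κ:ℝ)/2) * Real.sqrt (W ω)) ^ (2 / ((κ:ℝ) + 2)))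
    (ξ : ℝ → ℝ) (hξ : ∀ z ∈ Ioc (0:ℝ) Z, ξ z = ζ z / z) :
    ∃ L : ℝ, Tendsto ξ (nhdsWithin 0 (Ioi 0)) (nhds L) ∧ L ^ ((κ:ℝ) + 2) = W 0 := by
  set p : ℝ := (κ:ℝ) / 2 with hp_def
  have hp : -1 < p := by
    have : (-1:ℝ) ≤ κ := by exact_mod_cast hκ
    rw [hp_def]; linarith
  have hp1 : p + 1 ≠ 0 := by linarith
  have hc : ((κ:ℝ) + 2) / 2 = p + 1 := by ring
  have he : 2 / ((κ:ℝ) + 2) = (p + 1)⁻¹ := by rw [← hc, inv_div]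
  have hlim := tendsto_rpow_weighted_average (g := fun ω => Real.sqrt (W ω)) hp hZ
    (Real.continuous_sqrt.comp_continuousOn hW.continuousOn)
  refine ⟨Real.sqrt (W 0) ^ (p + 1)⁻¹, ?_, ?_⟩
  · refine (hlim.rpow_const (Or.inr (inv_pos.mpr (by linarith)).le)).congr' ?_
    filter_upwards [Ioc_mem_nhdsGT_of_mem ⟨le_rfl, hZ⟩] with z hz
    have hI : 0 ≤ (p + 1) * ∫ ω in (0:ℝ)..z, ω ^ p * Real.sqrt (W ω) :=
      mul_nonneg (by linarith) (intervalIntegral.integral_nonneg hz.1.le fun ω hω =>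
        mul_nonneg (Real.rpow_nonneg hω.1 _) (Real.sqrt_nonneg _))
    rw [hξ z hz, hζ z, hc, he, rpow_inv_div_eq hp1 hI hz.1]
  · have htwo : (p + 1)⁻¹ * ((κ:ℝ) + 2) = 2 := by
      rw [← hc, inv_div, div_mul_cancel₀ _ (by linarith)]
    rw [← Real.rpow_mul (Real.sqrt_nonneg _), htwo, Real.rpow_two,
      Real.sq_sqrt (hWpos 0 ⟨le_rfl, hZ.le⟩).le]
end

section
/- Fix κ ≥ 2 an integer and a continuous function E₀ : [0,Z] → ℂ with E₀(0) ≠ 0. Define γ₀(ζ) = (1/(2ζ^{κ/2})) ∫_ζ^Z E₀(ω) ω^{-κ/2} dω for ζ ∈ (0,Z). Then if κ ≠ 2, γ₀(ζ) · ζ^{κ-1} → E₀(0)/(κ-2) as ζ → 0⁺; and if κ = 2, γ₀(ζ)·ζ/(-log ζ) → E₀(0)/2 as ζ → 0⁺. In particular γ₀ does not extend continuously to ζ = 0. -/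
/-!
Write `W(ζ) = ∫_ζ^Z ω^{-κ/2} dω`. The weight is positive and `W(ζ) → ∞` as `ζ → 0⁺`, so
`∫_ζ^Z E₀(ω) ω^{-κ/2} dω` is a weighted average of `E₀` concentrating at `0`: it is
`E₀(0) W(ζ) + o(W(ζ))`. Explicitly `W(ζ) ~ ζ^{1-κ/2}/(κ/2 - 1)` for `κ > 2` and `W(ζ) ~ -log ζ`
for `κ = 2`, which gives both limits. Since the normalising factors `ζ^{κ-1}` and `ζ/(-log ζ)`
tend to `0` while the limits are nonzero, `γ₀` itself cannot converge.
-/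

open Set Filter
open MeasureTheory intervalIntegral Real Topology

theorem tendsto_rpow_nhdsGT_zero_of_pos {y : ℝ} (hy : 0 < y) :
    Tendsto (fun x : ℝ => x ^ y) (𝓝[>] 0) (𝓝 0) := by
  simpa [zero_rpow hy.ne'] using
    (continuousAt_rpow_const 0 y (Or.inr hy.le)).tendsto.mono_left nhdsWithin_le_nhds

theorem tendsto_div_neg_log_nhdsGT_zero : Tendsto (fun x : ℝ => x / -log x) (𝓝[>] 0) (𝓝 0) :=
  (tendsto_nhdsWithin_of_tendsto_nhds tendsto_id).div_atTop
    (tendsto_neg_atBot_atTop.comp tendsto_log_nhdsGT_zero)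

theorem not_exists_tendsto_of_tendsto_mul {α M : Type*} [MulZeroClass M] [TopologicalSpace M]
    [ContinuousMul M] [T2Space M] {l : Filter α} [l.NeBot] {g r : α → M} {c : M}
    (hr : Tendsto r l (𝓝 0)) (hc : c ≠ 0) (hgr : Tendsto (fun x => g x * r x) l (𝓝 c)) :
    ¬ ∃ L, Tendsto g l (𝓝 L) := by
  rintro ⟨L, hL⟩
  exact hc (tendsto_nhds_unique hgr (by simpa using hL.mul hr))

section WeightedIntegral

variable {E : Type*} [NormedAddCommGroup E] {a b : ℝ}

theorem intervalIntegrable_of_continuousOn_Ioc {g : ℝ → E} (hg : ContinuousOn g (Ioc a b))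
    {x y : ℝ} (hx : x ∈ Ioc a b) (hy : y ∈ Ioc a b) : IntervalIntegrable g volume x y :=
  (hg.mono fun _ ht => ⟨(lt_min hx.1 hy.1).trans_le ht.1, ht.2.trans (max_le hx.2 hy.2)⟩)
    |>.intervalIntegrable

variable [NormedSpace ℝ E] {f : ℝ → E} {w : ℝ → ℝ}

theorem isLittleO_integral_smul_integral (hab : a < b) (hw : ContinuousOn w (Ioc a b))
    (hw0 : ∀ x ∈ Ioc a b, 0 ≤ w x) (hW : Tendsto (fun ζ => ∫ x in ζ..b, w x) (𝓝[>] a) atTop)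
    (hf : ContinuousOn f (Icc a b)) (hfa : f a = 0) :
    (fun ζ => ∫ x in ζ..b, w x • f x) =o[𝓝[>] a] fun ζ => ∫ x in ζ..b, w x := by
  refine Asymptotics.IsLittleO.of_bound fun c hc => ?_
  have hf_lim : Tendsto f (𝓝[>] a) (𝓝 0) := by
    rw [← hfa, ← nhdsWithin_Ioc_eq_nhdsGT hab]
    exact (hf a (left_mem_Icc.2 hab.le)).mono Ioc_subset_Icc_self
  obtain ⟨u, hu, hfu⟩ := mem_nhdsGT_iff_exists_Ioc_subset.1
    (hf_lim.eventually (Metric.closedBall_mem_nhds (0 : E) (half_pos hc)))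
  set δ := min u b
  have hδ : δ ∈ Ioc a b := ⟨lt_min hu hab, min_le_right _ _⟩
  have hwf : ContinuousOn (fun x => w x • f x) (Ioc a b) := hw.smul (hf.mono Ioc_subset_Icc_self)
  have hb : b ∈ Ioc a b := ⟨hab, le_rfl⟩
  -- On `(a, δ]` the integrand is at most `(c/2) w`; the rest is a constant that `(c/2) W(ζ)`
  -- eventually dominates.
  filter_upwards [Ioo_mem_nhdsGT hδ.1,
    (hW.const_mul_atTop (half_pos hc)).eventually_ge_atTop
      (‖∫ x in δ..b, w x • f x‖ - c / 2 * ∫ x in δ..b, w x)] with ζ hζ hWζ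
  have hζ' : ζ ∈ Ioc a b := ⟨hζ.1, hζ.2.le.trans hδ.2⟩
  have hnear : ‖∫ x in ζ..δ, w x • f x‖ ≤ c / 2 * ∫ x in ζ..δ, w x := by
    rw [← intervalIntegral.integral_const_mul]
    refine norm_integral_le_of_norm_le hζ.2.le (ae_of_all _ fun x hx => ?_)
      ((intervalIntegrable_of_continuousOn_Ioc hw hζ' hδ).const_mul _)
    have hx' : x ∈ Ioc a b := ⟨hζ.1.trans hx.1, hx.2.trans hδ.2⟩
    have hfx : ‖f x‖ ≤ c / 2 := by
      simpa using hfu ⟨hζ.1.trans hx.1, hx.2.trans (min_le_left _ _)⟩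
    rw [norm_smul, Real.norm_of_nonneg (hw0 x hx'), mul_comm]
    exact mul_le_mul_of_nonneg_right hfx (hw0 x hx')
  have hWsplit := integral_add_adjacent_intervals
    (intervalIntegrable_of_continuousOn_Ioc hw hζ' hδ)
    (intervalIntegrable_of_continuousOn_Ioc hw hδ hb)
  calc ‖∫ x in ζ..b, w x • f x‖
      = ‖(∫ x in ζ..δ, w x • f x) + ∫ x in δ..b, w x • f x‖ := by
        rw [integral_add_adjacent_intervals (intervalIntegrable_of_continuousOn_Ioc hwf hζ' hδ)
          (intervalIntegrable_of_continuousOn_Ioc hwf hδ hb)]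
    _ ≤ c / 2 * (∫ x in ζ..δ, w x) + ‖∫ x in δ..b, w x • f x‖ :=
        (norm_add_le _ _).trans (by gcongr)
    _ ≤ c * ∫ x in ζ..b, w x := by rw [← hWsplit] at hWζ ⊢; linarith
    _ ≤ c * ‖∫ x in ζ..b, w x‖ := mul_le_mul_of_nonneg_left (le_norm_self _) hc.le

variable [CompleteSpace E]

theorem tendsto_inv_smul_integral_smul {V : ℝ → ℝ} {r : ℝ} (hab : a < b)
    (hw : ContinuousOn w (Ioc a b)) (hw0 : ∀ x ∈ Ioc a b, 0 ≤ w x) (hf : ContinuousOn f (Icc a b))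
    (hV : Tendsto V (𝓝[>] a) atTop) (hr : 0 < r)
    (hWV : Tendsto (fun ζ => (∫ x in ζ..b, w x) / V ζ) (𝓝[>] a) (𝓝 r)) :
    Tendsto (fun ζ => (V ζ)⁻¹ • ∫ x in ζ..b, w x • f x) (𝓝[>] a) (𝓝 (r • f a)) := by
  have hW : Tendsto (fun ζ => ∫ x in ζ..b, w x) (𝓝[>] a) atTop := by
    refine (hWV.pos_mul_atTop hr hV).congr' ?_
    filter_upwards [hV.eventually_gt_atTop 0] with ζ hζ using div_mul_cancel₀ _ hζ.ne'
  have hsmall := (isLittleO_integral_smul_integral (f := fun x => f x - f a) hab hw hw0 hW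
    (hf.sub continuousOn_const) (sub_self _)).tendsto_inv_smul_nhds_zero
  have hlim := (hWV.smul hsmall).add (hWV.smul_const (f a))
  rw [smul_zero, zero_add] at hlim
  refine hlim.congr' ?_
  filter_upwards [Ioo_mem_nhdsGT hab, hW.eventually_gt_atTop 0] with ζ hζ hWζ
  have hζ' : ζ ∈ Ioc a b := ⟨hζ.1, hζ.2.le⟩
  have hb : b ∈ Ioc a b := ⟨hab, le_rfl⟩
  have hIsub : ∫ x in ζ..b, w x • (f x - f a)
      = (∫ x in ζ..b, w x • f x) - (∫ x in ζ..b, w x) • f a := by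
    simp only [smul_sub]
    rw [integral_sub
      (intervalIntegrable_of_continuousOn_Ioc (g := fun x => w x • f x)
        (hw.smul (hf.mono Ioc_subset_Icc_self)) hζ' hb)
      (intervalIntegrable_of_continuousOn_Ioc (g := fun x => w x • f a)
        (hw.smul continuousOn_const) hζ' hb),
      intervalIntegral.integral_smul_const]
  rw [hIsub]
  match_scalars <;> field_simp
  ring

variable {Z : ℝ}

theorem tendsto_rpow_smul_integral_rpow_neg_smul {p : ℝ} (hp : 1 < p) (hZ : 0 < Z)
    (hf : ContinuousOn f (Icc 0 Z)) :
    Tendsto (fun ζ => ζ ^ (p - 1) • ∫ ω in ζ..Z, ω ^ (-p) • f ω) (𝓝[>] 0)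
      (𝓝 ((p - 1)⁻¹ • f 0)) := by
  have hV : Tendsto (fun ζ : ℝ => ζ ^ (1 - p)) (𝓝[>] 0) atTop :=
    tendsto_rpow_neg_nhdsGT_zero (by linarith)
  have hWV : Tendsto (fun ζ => (∫ ω in ζ..Z, ω ^ (-p)) / ζ ^ (1 - p)) (𝓝[>] 0)
      (𝓝 (p - 1)⁻¹) := by
    have hlim := (((tendsto_rpow_nhdsGT_zero_of_pos (sub_pos.2 hp)).const_mul
      (Z ^ (1 - p))).const_sub 1).div_const (p - 1)
    rw [mul_zero, sub_zero, one_div] at hlim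
    refine hlim.congr' ?_
    filter_upwards [self_mem_nhdsWithin] with ζ (hζ : 0 < ζ)
    have hcancel : ζ ^ (p - 1) * ζ ^ (1 - p) = 1 := by
      rw [← rpow_add hζ]; simp
    have hp' : 1 - p ≠ 0 := by linarith
    have hp1 : p - 1 ≠ 0 := by linarith
    rw [integral_rpow (Or.inr ⟨by linarith, notMem_uIcc_of_lt hζ hZ⟩), neg_add_eq_sub]
    field_simp
    linear_combination (p - 1) * Z ^ (1 - p) * hcancel
  refine (tendsto_inv_smul_integral_smul hZ
    (continuousOn_id.rpow_const fun x hx => Or.inl hx.1.ne')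
    (fun x hx => rpow_nonneg hx.1.le _) hf hV (inv_pos.2 (by linarith)) hWV).congr' ?_
  filter_upwards [self_mem_nhdsWithin] with ζ (hζ : 0 < ζ)
  rw [← rpow_neg hζ.le, neg_sub]
  rfl

theorem tendsto_inv_neg_log_smul_integral_inv_smul (hZ : 0 < Z) (hf : ContinuousOn f (Icc 0 Z)) :
    Tendsto (fun ζ => (-log ζ)⁻¹ • ∫ ω in ζ..Z, ω⁻¹ • f ω) (𝓝[>] 0) (𝓝 (f 0)) := by
  have hV : Tendsto (fun ζ => -log ζ) (𝓝[>] 0) atTop :=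
    tendsto_neg_atBot_atTop.comp tendsto_log_nhdsGT_zero
  have hWV : Tendsto (fun ζ => (∫ ω in ζ..Z, ω⁻¹) / -log ζ) (𝓝[>] 0) (𝓝 1) := by
    have hlim := (tendsto_const_nhds (x := log Z)).div_atTop hV |>.const_add 1
    rw [add_zero] at hlim
    refine hlim.congr' ?_
    filter_upwards [hV.eventually_gt_atTop 0, self_mem_nhdsWithin] with ζ hlog (hζ : 0 < ζ)
    have hlog' : log ζ ≠ 0 := (neg_pos.1 hlog).ne
    rw [integral_inv_of_pos hζ hZ, log_div hZ.ne' hζ.ne']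
    field_simp
    ring
  simpa using tendsto_inv_smul_integral_smul hZ (continuousOn_inv₀.mono fun x hx => hx.1.ne')
    (fun x hx => inv_nonneg.2 hx.1.le) hf hV one_pos hWV

end WeightedIntegral

section LangerOlver

variable {E₀ γ : ℝ → ℂ} {Z : ℝ}

theorem tendsto_mul_rpow_of_eq_integral_rpow_neg {p : ℝ} (hp : 1 < p) (hZ : 0 < Z)
    (hE : ContinuousOn E₀ (Icc 0 Z))
    (hγ : ∀ᶠ ζ in 𝓝[>] 0, γ ζ = (∫ ω in ζ..Z, ω ^ (-p) • E₀ ω) / (2 * ((ζ ^ p : ℝ) : ℂ))) :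
    Tendsto (fun ζ => γ ζ * ((ζ ^ (2 * p - 1) : ℝ) : ℂ)) (𝓝[>] 0)
      (𝓝 (E₀ 0 / (2 * ((p : ℂ) - 1)))) := by
  have hlim := (tendsto_rpow_smul_integral_rpow_neg_smul hp hZ hE).div_const 2
  have hp1 : (p : ℂ) - 1 ≠ 0 := by exact_mod_cast (sub_pos.2 hp).ne'
  rw [show (p - 1)⁻¹ • E₀ 0 / 2 = E₀ 0 / (2 * ((p : ℂ) - 1)) by
    rw [Complex.real_smul]; push_cast; field_simp] at hlim
  refine hlim.congr' ?_
  filter_upwards [hγ, self_mem_nhdsWithin] with ζ hγζ (hζ : 0 < ζ)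
  have hpow : ζ ^ (2 * p - 1) = ζ ^ p * ζ ^ (p - 1) := by
    rw [← rpow_add hζ]; ring_nf
  have hne : ((ζ ^ p : ℝ) : ℂ) ≠ 0 := by exact_mod_cast (rpow_pos_of_pos hζ p).ne'
  rw [hγζ, hpow, Complex.ofReal_mul, Complex.real_smul]
  field_simp

theorem tendsto_mul_div_neg_log_of_eq_integral_inv (hZ : 0 < Z)
    (hE : ContinuousOn E₀ (Icc 0 Z))
    (hγ : ∀ᶠ ζ in 𝓝[>] 0, γ ζ = (∫ ω in ζ..Z, ω⁻¹ • E₀ ω) / (2 * ζ)) :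
    Tendsto (fun ζ => γ ζ * ζ / ((-log ζ : ℝ) : ℂ)) (𝓝[>] 0) (𝓝 (E₀ 0 / 2)) := by
  refine ((tendsto_inv_neg_log_smul_integral_inv_smul hZ hE).div_const 2).congr' ?_
  filter_upwards [hγ, self_mem_nhdsWithin, Ioo_mem_nhdsGT one_pos] with ζ hγζ (hζ : 0 < ζ) hζ1
  have hlog : log ζ ≠ 0 := (log_neg hζ hζ1.2).ne
  have hζ0 : (ζ : ℂ) ≠ 0 := by exact_mod_cast hζ.ne'
  rw [hγζ, Complex.real_smul, Complex.ofReal_inv, Complex.ofReal_neg]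
  field_simp

end LangerOlver

/-- For `κ ≥ 2` and continuous `E₀` with `E₀(0) ≠ 0`, the leading
Langer–Olver coefficient `γ₀(ζ) = (1/(2ζ^{κ/2})) ∫_ζ^Z E₀(ω) ω^{-κ/2} dω` satisfies
`γ₀(ζ) ζ^{κ-1} → E₀(0)/(κ-2)` if `κ ≠ 2`, and `γ₀(ζ) ζ/(-log ζ) → E₀(0)/2` if
`κ = 2`; in particular `γ₀` does not extend continuously to `ζ = 0`. -/
theorem langer_olver_gamma_zero_singular
    (κ : ℤ) (hκ : 2 ≤ κ) (Z : ℝ) (hZ : 0 < Z)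
    (E₀ : ℝ → ℂ) (hE : ContinuousOn E₀ (Icc 0 Z)) (hE0 : E₀ 0 ≠ 0)
    (γ₀ : ℝ → ℂ)
    (hγ : ∀ ζ ∈ Ioo (0:ℝ) Z,
        γ₀ ζ = (1 / (2 * ((ζ ^ ((κ:ℝ)/2) : ℝ) : ℂ)))
          * ∫ ω in ζ..Z, E₀ ω * ((ω ^ (-(κ:ℝ)/2) : ℝ) : ℂ)) :
    (κ ≠ 2 → Tendsto (fun ζ : ℝ => γ₀ ζ * ((ζ ^ ((κ:ℝ) - 1) : ℝ) : ℂ))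
        (nhdsWithin 0 (Ioi 0)) (nhds (E₀ 0 / ((κ : ℂ) - 2))))
    ∧ (κ = 2 → Tendsto (fun ζ : ℝ => γ₀ ζ * (ζ : ℂ) / ((-Real.log ζ : ℝ) : ℂ))
        (nhdsWithin 0 (Ioi 0)) (nhds (E₀ 0 / 2)))
    ∧ ¬ ∃ L : ℂ, Tendsto γ₀ (nhdsWithin 0 (Ioi 0)) (nhds L) := by
  set p : ℝ := κ / 2 with hp
  have hγ' : ∀ᶠ ζ in 𝓝[>] 0,
      γ₀ ζ = (∫ ω in ζ..Z, ω ^ (-p) • E₀ ω) / (2 * ((ζ ^ p : ℝ) : ℂ)) := by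
    filter_upwards [Ioo_mem_nhdsGT hZ] with ζ hζ
    rw [hγ ζ hζ, one_div_mul_eq_div]
    congr 1
    refine integral_congr fun ω _ => ?_
    rw [Complex.real_smul, mul_comm, hp, neg_div]
  have hκ' : (2 : ℝ) ≤ κ := by exact_mod_cast hκ
  have h_ne : κ ≠ 2 → Tendsto (fun ζ : ℝ => γ₀ ζ * ((ζ ^ ((κ:ℝ) - 1) : ℝ) : ℂ))
      (𝓝[>] 0) (𝓝 (E₀ 0 / ((κ : ℂ) - 2))) := fun hκ2 => by
    have hp1 : 1 < p := by
      have : (3 : ℝ) ≤ κ := by exact_mod_cast (by omega : (3 : ℤ) ≤ κ)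
      linarith
    have hexp : 2 * p - 1 = (κ : ℝ) - 1 := by rw [hp]; ring
    have hden : 2 * ((p : ℂ) - 1) = κ - 2 := by rw [hp]; push_cast; ring
    simpa only [hexp, hden] using tendsto_mul_rpow_of_eq_integral_rpow_neg hp1 hZ hE hγ'
  have h_eq : κ = 2 → Tendsto (fun ζ : ℝ => γ₀ ζ * (ζ : ℂ) / ((-Real.log ζ : ℝ) : ℂ))
      (𝓝[>] 0) (𝓝 (E₀ 0 / 2)) := fun hκ2 => by
    have hp1 : p = 1 := by rw [hp, hκ2]; norm_num
    refine tendsto_mul_div_neg_log_of_eq_integral_inv hZ hE (hγ'.mono fun ζ h => ?_)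
    simpa [hp1, rpow_neg_one] using h
  refine ⟨h_ne, h_eq, ?_⟩
  by_cases hκ2 : κ = 2
  · have hrate : Tendsto (fun ζ : ℝ => (ζ : ℂ) / ((-log ζ : ℝ) : ℂ)) (𝓝[>] 0) (𝓝 0) := by
      simpa only [Complex.ofReal_div, Complex.ofReal_zero] using
        tendsto_div_neg_log_nhdsGT_zero.ofReal
    refine not_exists_tendsto_of_tendsto_mul hrate (div_ne_zero hE0 two_ne_zero) ?_
    simpa only [mul_div_assoc] using h_eq hκ2
  · refine not_exists_tendsto_of_tendsto_mul
      (by simpa using (tendsto_rpow_nhdsGT_zero_of_pos (by linarith : (0 : ℝ) < κ - 1)).ofReal)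
      (div_ne_zero hE0 (sub_ne_zero.2 (by exact_mod_cast hκ2))) (h_ne hκ2)
end

section
/- Let 𝖹 > 0 and n, ℓ ∈ ℕ with n ≥ ℓ + 1. Let ψ_{n,ℓ}(r) = C · e^{-𝖹r/(2n)} (𝖹r/n)^ℓ L^{2ℓ+1}_{n-ℓ-1}(𝖹r/n), where L^α_k is the generalized Laguerre polynomial and C is any constant. Then the function u(r) = r·ψ_{n,ℓ}(r) satisfies u''(r) + (E_n + 𝖹/r - ℓ(ℓ+1)/r²) u(r) = 0 on (0,∞), where E_n = -𝖹²/(4n²). -/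
/-!
Put `c = Z / n` and `v(x) = e^{-x/2} x^{ℓ+1} L(x)`, so that `u(r) = (C / c) v(c r)`. The Laguerre
equation for `L` turns, by the product rule, into Whittaker's equation
`v'' + (-1/4 + n/x - ℓ(ℓ+1)/x²) v = 0` (with `κ = k + ℓ + 1 = n`, `μ = ℓ + 1/2`), and the
substitution `x = c r` rescales its coefficients to `-Z²/(4n²) + Z/r - ℓ(ℓ+1)/r²`.
-/

open Real

theorem deriv_deriv_mul {f g : ℝ → ℝ} (hf : ContDiff ℝ 2 f) (hg : ContDiff ℝ 2 g) (x : ℝ) :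
    deriv (deriv fun y => f y * g y) x =
      deriv (deriv f) x * g x + 2 * (deriv f x * deriv g x) + f x * deriv (deriv g) x := by
  obtain ⟨hf₁, -, hf'⟩ := contDiff_succ_iff_deriv (n := 1).mp hf
  obtain ⟨hg₁, -, hg'⟩ := contDiff_succ_iff_deriv (n := 1).mp hg
  have hf'₁ := hf'.differentiable one_ne_zero
  have hg'₁ := hg'.differentiable one_ne_zero
  have hfg : deriv (fun y => f y * g y) = fun y => deriv f y * g y + f y * deriv g y :=
    funext fun y => deriv_mul (hf₁ y) (hg₁ y)
  rw [hfg, (((hf'₁ x).hasDerivAt.fun_mul (hg₁ x).hasDerivAt).fun_add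
    ((hf₁ x).hasDerivAt.fun_mul (hg'₁ x).hasDerivAt)).deriv]
  ring

theorem deriv_deriv_comp_mul_left (f : ℝ → ℝ) (c x : ℝ) :
    deriv (deriv fun y => f (c * y)) x = c ^ 2 * deriv (deriv f) (c * x) := by
  have h : deriv (fun y => f (c * y)) = fun y => c * deriv f (c * y) :=
    funext fun y => deriv_comp_mul_left c f y
  rw [h, deriv_const_mul_field, deriv_comp_mul_left c (deriv f) x, smul_eq_mul]
  ring

theorem deriv_deriv_exp_mul (a x : ℝ) :
    deriv (deriv fun y => exp (a * y)) x = a ^ 2 * exp (a * x) := by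
  rw [deriv_deriv_comp_mul_left, Real.deriv_exp, Real.deriv_exp]

-- Multiplied by `x` to avoid the truncated exponent `ℓ - 1`.
theorem deriv_deriv_pow_succ_mul_self (ℓ : ℕ) (x : ℝ) :
    deriv (deriv fun y => y ^ (ℓ + 1)) x * x = (ℓ + 1) * ℓ * x ^ ℓ := by
  have h : deriv (fun y : ℝ => y ^ (ℓ + 1)) = fun y => (ℓ + 1 : ℝ) * y ^ ℓ := by
    funext y; simp
  rw [h, deriv_const_mul_field, deriv_pow_field]
  cases ℓ with
  | zero => simp
  | succ m => push_cast; ring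

theorem whittaker_ode_of_laguerre_ode {L : ℝ → ℝ} (hL : ContDiff ℝ 2 L) (ℓ : ℕ) {k x : ℝ}
    (hx : x ≠ 0)
    (hLx : x * deriv (deriv L) x + ((2 * (ℓ : ℝ) + 1) + 1 - x) * deriv L x + k * L x = 0) :
    deriv (deriv fun y => exp (-y / 2) * (y ^ (ℓ + 1) * L y)) x
      + (-1 / 4 + (k + ℓ + 1) / x - ℓ * (ℓ + 1) / x ^ 2) * (exp (-x / 2) * (x ^ (ℓ + 1) * L x))
      = 0 := by
  have hexp : (fun y => exp (-y / 2)) = fun y => exp (-(1 / 2) * y) := by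
    funext y; ring_nf
  have hexp' : deriv (fun y => exp (-y / 2)) x = -(1 / 2) * exp (-x / 2) := by
    rw [hexp, deriv_comp_mul_left, Real.deriv_exp, smul_eq_mul]; ring_nf
  have hexp'' : deriv (deriv fun y => exp (-y / 2)) x = 1 / 4 * exp (-x / 2) := by
    rw [hexp, deriv_deriv_exp_mul]; ring_nf
  have hpow' : deriv (fun y => y ^ (ℓ + 1)) x = (ℓ + 1) * x ^ ℓ := by simp
  have hpow'' := deriv_deriv_pow_succ_mul_self ℓ x
  have hLd : DifferentiableAt ℝ L x := hL.differentiable two_ne_zero x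
  have hpowL' : deriv (fun y => y ^ (ℓ + 1) * L y) x =
      (ℓ + 1) * x ^ ℓ * L x + x ^ (ℓ + 1) * deriv L x := by
    rw [deriv_fun_mul (by fun_prop) hLd, hpow']
  rw [deriv_deriv_mul (by fun_prop) ((by fun_prop : ContDiff ℝ 2 fun y : ℝ => y ^ (ℓ + 1)).mul hL),
    deriv_deriv_mul (by fun_prop) hL, hexp', hexp'', hpow', hpowL']
  field_simp
  linear_combination
    (4 * x ^ (ℓ + 2) * exp (-(x / 2))) * hLx + (4 * x * exp (-(x / 2)) * L x) * hpow''

/-- For `Z > 0` and `n ≥ ℓ + 1`, the hydrogen radial function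
`ψ(r) = C e^{-Zr/(2n)} (Zr/n)^ℓ L^{2ℓ+1}_{n-ℓ-1}(Zr/n)` (with `L` a solution of the
generalized Laguerre ODE `x y'' + (α+1-x) y' + k y = 0`, `α = 2ℓ+1`, `k = n-ℓ-1`)
gives `u(r) = r ψ(r)` solving `u'' + (E_n + Z/r - ℓ(ℓ+1)/r²) u = 0` on `(0,∞)`,
where `E_n = -Z²/(4n²)`. -/
theorem hydrogen_radial_wavefunction_solves
    (Z : ℝ) (hZ : 0 < Z) (n ℓ : ℕ) (hn : ℓ + 1 ≤ n)
    (L : ℝ → ℝ) (hLsmooth : ContDiff ℝ (⊤ : ℕ∞) L)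
    (hL : ∀ x : ℝ,
        x * deriv (deriv L) x + ((2 * (ℓ:ℝ) + 1) + 1 - x) * deriv L x
          + ((n:ℝ) - (ℓ:ℝ) - 1) * L x = 0)
    (C : ℝ) (ψ u : ℝ → ℝ)
    (hψ : ∀ r : ℝ,
        ψ r = C * Real.exp (-(Z * r) / (2 * (n:ℝ))) * (Z * r / (n:ℝ))^ℓ * L (Z * r / (n:ℝ)))
    (hu : ∀ r : ℝ, u r = r * ψ r) :
    ∀ r > (0:ℝ),
      deriv (deriv u) r
        + ((-(Z^2) / (4 * (n:ℝ)^2)) + Z / r - ((ℓ:ℝ) * ((ℓ:ℝ) + 1)) / r^2) * u r = 0 := by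
  intro r hr
  have hn0 : (n : ℝ) ≠ 0 := Nat.cast_ne_zero.mpr (by omega)
  obtain ⟨c, hc_def⟩ : ∃ c : ℝ, c = Z / n := ⟨_, rfl⟩
  have hc : c ≠ 0 := hc_def ▸ div_ne_zero hZ.ne' hn0
  have hZc : Z = c * n := by rw [hc_def]; field_simp
  have hu_eq : u = fun t => C / c * (exp (-(c * t) / 2) * ((c * t) ^ (ℓ + 1) * L (c * t))) := by
    funext t
    have harg : -(Z * t) / (2 * n) = -(c * t) / 2 := by rw [hc_def]; ring
    have hx : Z * t / n = c * t := by rw [hc_def]; ring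
    rw [hu, hψ, harg, hx]
    field_simp
    ring
  have hW := whittaker_ode_of_laguerre_ode (hLsmooth.of_le (by norm_cast)) ℓ
    (mul_ne_zero hc hr.ne') (hL (c * r))
  rw [hu_eq, deriv_const_mul_field', deriv_const_mul_field,
    deriv_deriv_comp_mul_left (fun y => exp (-y / 2) * (y ^ (ℓ + 1) * L y)), hZc]
  linear_combination (norm := skip) (C * c) * hW
  field_simp
  ring
end
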